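/- For all positive integers p, q, m, n, the dual map π is a well-defined surjective group homomorphism from K(mp,nq) to K(p,q): for every ψ ∈ K(mp,nq) the function π(ψ) vanishes outside Γ(p,q) and satisfies 4·π(ψ)(v) = Σ_{|w−v|=1} π(ψ)(w) for all v ∈ Γ(p,q); moreover π is additive and surjective. (This realizes an epimorphism of sandpile groups G(mp,nq) ↠ G(p,q).) -/
import Mathlib


open scoped BigOperators

/-- `v` lies in the open rectangle `Γ(p,q) = (0,p) × (0,q) ∩ ℤ²`. -/
def InRect (p q : ℤ) (v : ℤ × ℤ) : Prop :=
  0 < v.1 ∧ v.1 < p ∧ 0 < v.2 ∧ v.2 < q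

/-- `ψ : ℤ² → ℝ/ℤ` belongs to `K(p,q)`, the realization of the sandpile group
`G(p,q)`: it vanishes outside `Γ(p,q)` and satisfies
`4·ψ(v) = Σ_{|w−v|=1} ψ(w)` for all `v ∈ Γ(p,q)`. -/
def IsK (p q : ℤ) (ψ : ℤ × ℤ → AddCircle (1 : ℝ)) : Prop :=
  (∀ v, ¬ InRect p q v → ψ v = 0) ∧
  ∀ v, InRect p q v → (4 : ℤ) • ψ v =
    ψ (v.1 + 1, v.2) + ψ (v.1 - 1, v.2) + ψ (v.1, v.2 + 1) + ψ (v.1, v.2 - 1)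

/-- `σ_p(x) = x − kp` if `k = ⌊x/p⌋` is even and `(k+1)p − x` if `k` is odd. -/
def sigmaFold (p x : ℤ) : ℤ :=
  if Even (x / p) then x - x / p * p else (x / p + 1) * p - x

open Classical in
/-- The fold map `ι : K(p,q) → K(P,Q)` (with `P = mp`, `Q = nq`):
`ι(ψ)(x,y) = (−1)^{⌊x/p⌋+⌊y/q⌋} ψ(σ_p(x), σ_q(y))` on `Γ(P,Q)` and `0` outside. -/
noncomputable def foldMap (p q P Q : ℤ) (ψ : ℤ × ℤ → AddCircle (1 : ℝ)) :
    ℤ × ℤ → AddCircle (1 : ℝ) :=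
  fun v => if InRect P Q v then
      ((if Even (v.1 / p + v.2 / q) then (1 : ℤ) else -1)) •
        ψ (sigmaFold p v.1, sigmaFold q v.2)
    else 0

/-- `μ_{p,k}(x) = kp + x` if `k` is even and `(k+1)p − x` if `k` is odd. -/
def muFold (p k x : ℤ) : ℤ := if Even k then k * p + x else (k + 1) * p - x

open Classical in
/-- The dual map `π : K(mp,nq) → K(p,q)`:
`π(ψ)(x,y) = Σ_{k<m} Σ_{l<n} (−1)^{k+l} ψ(μ_{p,k}(x), μ_{q,l}(y))` on `Γ(p,q)`
and `0` outside. -/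
noncomputable def dualMap (p q : ℤ) (m n : ℕ) (ψ : ℤ × ℤ → AddCircle (1 : ℝ)) :
    ℤ × ℤ → AddCircle (1 : ℝ) :=
  fun v => if InRect p q v then
      ∑ k ∈ Finset.range m, ∑ l ∈ Finset.range n,
        ((-1 : ℤ) ^ (k + l)) • ψ (muFold p k v.1, muFold q l v.2)
    else 0

/-! ### Auxiliary material -/

open Finset

section Aux

lemma muFold_succ (p k x : ℤ) :
    muFold p k (x + 1) = if Even k then muFold p k x + 1 else muFold p k x - 1 := by
  simp only [muFold]; split <;> ring

lemma muFold_pred (p k x : ℤ) :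
    muFold p k (x - 1) = if Even k then muFold p k x - 1 else muFold p k x + 1 := by
  simp only [muFold]; split <;> ring

lemma muFold_zero_left (p x : ℤ) : muFold p 0 x = x := by simp [muFold]

lemma muFold_mem {p : ℤ} (hp : 0 < p) {m k : ℕ} (hk : k < m) {x : ℤ}
    (hx : 0 < x) (hx' : x < p) : 0 < muFold p k x ∧ muFold p k x < (m : ℤ) * p := by
  have hk' : (k : ℤ) + 1 ≤ (m : ℤ) := by exact_mod_cast hk
  have h1 : ((k : ℤ) + 1) * p ≤ (m : ℤ) * p := mul_le_mul_of_nonneg_right hk' hp.le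
  have hk0 : (0 : ℤ) ≤ (k : ℤ) := Int.natCast_nonneg k
  unfold muFold; split <;> constructor <;> nlinarith

lemma muFold_ge {p : ℤ} (hp : 0 < p) {k : ℕ} (hk : 0 < k) {x : ℤ}
    (hx : 0 < x) (hx' : x < p) : p ≤ muFold p k x := by
  have hk1 : (1 : ℤ) ≤ (k : ℤ) := by exact_mod_cast hk
  unfold muFold; split <;> nlinarith

variable {M : Type*} [AddCommGroup M]

lemma sum_mu_top (p : ℤ) (m : ℕ) (t : ℤ → M) (htm : t ((m : ℤ) * p) = 0) :
    ∑ k ∈ range m, ((-1 : ℤ) ^ k) • t (muFold p k p) = 0 := by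
  set c : ℕ → M := fun j => if Odd j then t ((j : ℤ) * p) else 0 with hc
  have key : ∀ k ∈ range m, ((-1 : ℤ) ^ k) • t (muFold p k p) = c (k + 1) - c k := by
    intro k _
    rcases Nat.even_or_odd k with hk | hk
    · have hk' : Even (k : ℤ) := by exact_mod_cast hk
      rw [hc]
      simp only [muFold, if_pos hk', if_pos (Even.add_one hk),
        if_neg (Nat.not_odd_iff_even.mpr hk), hk.neg_one_pow, one_smul, sub_zero]
      congr 1; push_cast; ring
    · have hk' : ¬ Even (k : ℤ) := by
        rw [Int.even_coe_nat]; exact Nat.not_even_iff_odd.mpr hk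
      rw [hc]
      simp only [muFold, if_neg hk', if_neg (Nat.not_odd_iff_even.mpr hk.add_one),
        if_pos hk, hk.neg_one_pow, neg_smul, one_smul, zero_sub]
      congr 2; push_cast; ring
  rw [Finset.sum_congr rfl key, Finset.sum_range_sub c m, hc]
  simp only
  rw [if_neg (by simp : ¬ Odd 0)]
  split
  · rw [htm]; simp
  · simp

lemma sum_mu_bot (p : ℤ) (m : ℕ) (t : ℤ → M) (ht0 : t 0 = 0)
    (htm : t ((m : ℤ) * p) = 0) :
    ∑ k ∈ range m, ((-1 : ℤ) ^ k) • t (muFold p k 0) = 0 := by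
  set c : ℕ → M := fun j => if Even j then t ((j : ℤ) * p) else 0 with hc
  have key : ∀ k ∈ range m, ((-1 : ℤ) ^ k) • t (muFold p k 0) = c k - c (k + 1) := by
    intro k _
    rcases Nat.even_or_odd k with hk | hk
    · have hk' : Even (k : ℤ) := by exact_mod_cast hk
      rw [hc]
      simp only [muFold, if_pos hk', if_pos hk,
        if_neg (Nat.not_even_iff_odd.mpr hk.add_one), hk.neg_one_pow, one_smul, sub_zero]
      congr 2; push_cast; ring
    · have hk' : ¬ Even (k : ℤ) := by
        rw [Int.even_coe_nat]; exact Nat.not_even_iff_odd.mpr hk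
      rw [hc]
      simp only [muFold, if_neg hk', if_neg (Nat.not_even_iff_odd.mpr hk),
        if_pos hk.add_one, hk.neg_one_pow, neg_smul, one_smul, zero_sub]
      congr 2; push_cast; ring
  rw [Finset.sum_congr rfl key]
  have h2 : ∑ k ∈ range m, (c k - c (k + 1)) = -∑ k ∈ range m, (c (k + 1) - c k) := by
    rw [← Finset.sum_neg_distrib]; congr 1; funext k; abel
  rw [h2, Finset.sum_range_sub c m, hc]
  simp only
  rw [if_pos Even.zero]
  have h3 : ((0 : ℕ) : ℤ) * p = 0 := by simp
  rw [h3, ht0]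
  split
  · rw [htm]; simp
  · simp

open Classical in
/-- The `M`-valued analogue of `dualMap`. -/
noncomputable def dClip (p q : ℤ) (m n : ℕ) (g : ℤ × ℤ → M) : ℤ × ℤ → M :=
  fun v => if InRect p q v then
      ∑ k ∈ Finset.range m, ∑ l ∈ Finset.range n,
        ((-1 : ℤ) ^ (k + l)) • g (muFold p k v.1, muFold q l v.2)
    else 0

lemma dsum_rearrange (p q : ℤ) (m n : ℕ) (g : ℤ × ℤ → M) (x y : ℤ) :
    ∑ k ∈ range m, ∑ l ∈ range n, ((-1 : ℤ) ^ (k + l)) • g (muFold p k x, muFold q l y)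
      = ∑ k ∈ range m, ((-1 : ℤ) ^ k) •
          ∑ l ∈ range n, ((-1 : ℤ) ^ l) • g (muFold p k x, muFold q l y) := by
  refine Finset.sum_congr rfl fun k _ => ?_
  rw [Finset.smul_sum]
  refine Finset.sum_congr rfl fun l _ => ?_
  rw [pow_add, mul_smul]

lemma notInRect_left {P Q : ℤ} {v : ℤ × ℤ} (h : ¬ 0 < v.1 ∨ ¬ v.1 < P) :
    ¬ InRect P Q v :=
  fun hv => h.elim (fun hh => hh hv.1) (fun hh => hh hv.2.1)

lemma notInRect_right {P Q : ℤ} {v : ℤ × ℤ} (h : ¬ 0 < v.2 ∨ ¬ v.2 < Q) :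
    ¬ InRect P Q v :=
  fun hv => h.elim (fun hh => hh hv.2.2.1) (fun hh => hh hv.2.2.2)

lemma sum_eq_dClip_x (p q : ℤ) (m n : ℕ) (g : ℤ × ℤ → M)
    (hg0 : ∀ v, ¬ InRect ((m : ℤ) * p) ((n : ℤ) * q) v → g v = 0)
    (x' y : ℤ) (hx0 : 0 ≤ x') (hxp : x' ≤ p) (hy1 : 0 < y) (hy2 : y < q) :
    ∑ k ∈ range m, ∑ l ∈ range n, ((-1 : ℤ) ^ (k + l)) • g (muFold p k x', muFold q l y)
      = dClip p q m n g (x', y) := by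
  by_cases hx : 0 < x' ∧ x' < p
  · rw [dClip, if_pos (show InRect p q (x', y) from ⟨hx.1, hx.2, hy1, hy2⟩)]
  · rw [dClip, if_neg (notInRect_left (show ¬ 0 < x' ∨ ¬ x' < p by tauto))]
    rw [dsum_rearrange]
    have hzero : ∀ s : ℤ, (¬ 0 < s ∨ ¬ s < (m : ℤ) * p) →
        (∑ l ∈ range n, ((-1 : ℤ) ^ l) • g (s, muFold q l y)) = 0 := fun s hs =>
      Finset.sum_eq_zero fun l _ => by
        rw [hg0 (s, muFold q l y) (notInRect_left hs), smul_zero]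
    have hb0 := hzero 0 (Or.inl (by omega))
    have hbm := hzero ((m : ℤ) * p) (Or.inr (by omega))
    by_cases hx0' : x' = 0
    · rw [hx0']
      exact sum_mu_bot p m (fun s => ∑ l ∈ range n, ((-1 : ℤ) ^ l) • g (s, muFold q l y)) hb0 hbm
    · have hxp' : x' = p := by omega
      rw [hxp']
      exact sum_mu_top p m (fun s => ∑ l ∈ range n, ((-1 : ℤ) ^ l) • g (s, muFold q l y)) hbm

lemma sum_eq_dClip_y (p q : ℤ) (m n : ℕ) (g : ℤ × ℤ → M)
    (hg0 : ∀ v, ¬ InRect ((m : ℤ) * p) ((n : ℤ) * q) v → g v = 0)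
    (x y' : ℤ) (hx1 : 0 < x) (hx2 : x < p) (hy0 : 0 ≤ y') (hyq : y' ≤ q) :
    ∑ k ∈ range m, ∑ l ∈ range n, ((-1 : ℤ) ^ (k + l)) • g (muFold p k x, muFold q l y')
      = dClip p q m n g (x, y') := by
  by_cases hy : 0 < y' ∧ y' < q
  · rw [dClip, if_pos (show InRect p q (x, y') from ⟨hx1, hx2, hy.1, hy.2⟩)]
  · rw [dClip, if_neg (notInRect_right (show ¬ 0 < y' ∨ ¬ y' < q by tauto))]
    rw [dsum_rearrange]
    refine Finset.sum_eq_zero fun k _ => ?_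
    have hzero : ∀ s : ℤ, (¬ 0 < s ∨ ¬ s < (n : ℤ) * q) → g (muFold p k x, s) = 0 :=
      fun s hs => hg0 _ (notInRect_right hs)
    have h : (∑ l ∈ range n, ((-1 : ℤ) ^ l) • g (muFold p k x, muFold q l y')) = 0 := by
      have hb0 := hzero 0 (Or.inl (by omega))
      have hbm := hzero ((n : ℤ) * q) (Or.inr (by omega))
      by_cases hy0' : y' = 0
      · rw [hy0']
        exact sum_mu_bot q n (fun s => g (muFold p k x, s)) hb0 hbm
      · have hyq' : y' = q := by omega
        rw [hyq']
        exact sum_mu_top q n (fun s => g (muFold p k x, s)) hbm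
    rw [h, smul_zero]

/-- Main harmonicity-transfer lemma (with source term `A` supported in the
small rectangle). -/
lemma dClip_harmonic (p q : ℤ) (m n : ℕ) (hp : 0 < p) (hq : 0 < q)
    (hm : 0 < m) (hn : 0 < n) (g A : ℤ × ℤ → M)
    (hg0 : ∀ v, ¬ InRect ((m : ℤ) * p) ((n : ℤ) * q) v → g v = 0)
    (hA0 : ∀ v, ¬ InRect p q v → A v = 0)
    (hgh : ∀ v, InRect ((m : ℤ) * p) ((n : ℤ) * q) v → (4 : ℤ) • g v =
      g (v.1 + 1, v.2) + g (v.1 - 1, v.2) + g (v.1, v.2 + 1) + g (v.1, v.2 - 1) + A v)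
    (v : ℤ × ℤ) (hv : InRect p q v) :
    (4 : ℤ) • dClip p q m n g v =
      dClip p q m n g (v.1 + 1, v.2) + dClip p q m n g (v.1 - 1, v.2) +
      dClip p q m n g (v.1, v.2 + 1) + dClip p q m n g (v.1, v.2 - 1) + A v := by
  obtain ⟨hx1, hx2, hy1, hy2⟩ := hv
  obtain ⟨x, y⟩ := v
  dsimp only at hx1 hx2 hy1 hy2 ⊢
  rw [dClip, if_pos (show InRect p q (x, y) from ⟨hx1, hx2, hy1, hy2⟩)]
  rw [Finset.smul_sum]
  have step1 : ∀ k ∈ range m, (4 : ℤ) • ∑ l ∈ range n,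
        ((-1 : ℤ) ^ (k + l)) • g (muFold p k x, muFold q l y)
      = ∑ l ∈ range n,
          (((-1 : ℤ) ^ (k + l)) • g (muFold p k (x + 1), muFold q l y)
          + ((-1 : ℤ) ^ (k + l)) • g (muFold p k (x - 1), muFold q l y)
          + ((-1 : ℤ) ^ (k + l)) • g (muFold p k x, muFold q l (y + 1))
          + ((-1 : ℤ) ^ (k + l)) • g (muFold p k x, muFold q l (y - 1))
          + ((-1 : ℤ) ^ (k + l)) • A (muFold p k x, muFold q l y)) := by
    intro k hk
    rw [Finset.smul_sum]
    refine Finset.sum_congr rfl fun l hl => ?_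
    rw [smul_comm]
    have hmem1 := muFold_mem hp (mem_range.mp hk) hx1 hx2
    have hmem2 := muFold_mem hq (mem_range.mp hl) hy1 hy2
    rw [hgh (muFold p k x, muFold q l y) ⟨hmem1.1, hmem1.2, hmem2.1, hmem2.2⟩]
    dsimp only
    rcases Int.even_or_odd (k : ℤ) with hke | hko <;>
      rcases Int.even_or_odd (l : ℤ) with hle | hlo
    · rw [muFold_succ, muFold_pred, muFold_succ, muFold_pred,
        if_pos hke, if_pos hke, if_pos hle, if_pos hle]
      simp only [smul_add]; try abel
    · rw [muFold_succ, muFold_pred, muFold_succ, muFold_pred,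
        if_pos hke, if_pos hke,
        if_neg (Int.not_even_iff_odd.mpr hlo), if_neg (Int.not_even_iff_odd.mpr hlo)]
      simp only [smul_add]; try abel
    · rw [muFold_succ, muFold_pred, muFold_succ, muFold_pred,
        if_neg (Int.not_even_iff_odd.mpr hko), if_neg (Int.not_even_iff_odd.mpr hko),
        if_pos hle, if_pos hle]
      simp only [smul_add]; try abel
    · rw [muFold_succ, muFold_pred, muFold_succ, muFold_pred,
        if_neg (Int.not_even_iff_odd.mpr hko), if_neg (Int.not_even_iff_odd.mpr hko),
        if_neg (Int.not_even_iff_odd.mpr hlo), if_neg (Int.not_even_iff_odd.mpr hlo)]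
      simp only [smul_add]; try abel
  rw [Finset.sum_congr rfl step1]
  simp only [Finset.sum_add_distrib]
  have hAcol : ∑ k ∈ range m, ∑ l ∈ range n,
      ((-1 : ℤ) ^ (k + l)) • A (muFold p k x, muFold q l y) = A (x, y) := by
    rw [Finset.sum_eq_single_of_mem 0 (mem_range.mpr hm)]
    · rw [Finset.sum_eq_single_of_mem 0 (mem_range.mpr hn)]
      · norm_num [muFold_zero_left]
      · intro l hl hl0
        rw [hA0 _ (notInRect_right (Or.inr (not_lt.mpr
            (muFold_ge hq (Nat.pos_of_ne_zero hl0) hy1 hy2)))), smul_zero]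
    · intro k hk hk0
      refine Finset.sum_eq_zero fun l hl => ?_
      rw [hA0 _ (notInRect_left (Or.inr (not_lt.mpr
          (muFold_ge hp (Nat.pos_of_ne_zero hk0) hx1 hx2)))), smul_zero]
  rw [hAcol,
    sum_eq_dClip_x p q m n g hg0 (x + 1) y (by omega) (by omega) hy1 hy2,
    sum_eq_dClip_x p q m n g hg0 (x - 1) y (by omega) (by omega) hy1 hy2,
    sum_eq_dClip_y p q m n g hg0 x (y + 1) hx1 hx2 (by omega) (by omega),
    sum_eq_dClip_y p q m n g hg0 x (y - 1) hx1 hx2 (by omega) (by omega)]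

end Aux

/-- Maximum principle: a discrete harmonic function with Dirichlet zero
boundary on a rectangle is ≤ 0 everywhere. -/
lemma maxPrinciple (P Q : ℤ) (g : ℤ × ℤ → ℝ)
    (h0 : ∀ v, ¬ InRect P Q v → g v = 0)
    (hh : ∀ v, InRect P Q v → 4 * g v =
      g (v.1 + 1, v.2) + g (v.1 - 1, v.2) + g (v.1, v.2 + 1) + g (v.1, v.2 - 1)) :
    ∀ v, g v ≤ 0 := by
  set S : Finset (ℤ × ℤ) := Finset.Ioo 0 P ×ˢ Finset.Ioo 0 Q with hS
  have hmemS : ∀ v : ℤ × ℤ, v ∈ S ↔ InRect P Q v := by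
    intro v
    rw [hS, Finset.mem_product, Finset.mem_Ioo, Finset.mem_Ioo, InRect]
    tauto
  set T : Finset ℝ := insert (0 : ℝ) (S.image g) with hT
  have hTne : T.Nonempty := ⟨0, Finset.mem_insert_self _ _⟩
  set Mx : ℝ := T.max' hTne with hMx
  have hub : ∀ w, g w ≤ Mx := by
    intro w
    by_cases hw : InRect P Q w
    · exact Finset.le_max' T _ (Finset.mem_insert_of_mem
        (Finset.mem_image_of_mem g ((hmemS w).mpr hw)))
    · rw [h0 w hw]
      exact Finset.le_max' T _ (Finset.mem_insert_self _ _)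
  have key : ∀ (t : ℕ) (v : ℤ × ℤ), v.1.toNat ≤ t → g v = Mx → Mx ≤ 0 := by
    intro t
    induction t with
    | zero =>
      intro v hv hg
      have hni : ¬ InRect P Q v := fun h => by
        have := h.1; omega
      rw [h0 v hni] at hg; rw [← hg]
    | succ t ih =>
      intro v hv hg
      by_cases hvin : InRect P Q v
      · have h4 := hh v hvin
        have ha := hub (v.1 + 1, v.2)
        have hb := hub (v.1 - 1, v.2)
        have hc := hub (v.1, v.2 + 1)
        have hd := hub (v.1, v.2 - 1)
        have hbM : g (v.1 - 1, v.2) = Mx := by linarith [hg ▸ h4]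
        refine ih (v.1 - 1, v.2) ?_ hbM
        have h1 : 0 < v.1 := hvin.1
        simp only
        omega
      · rw [h0 v hvin] at hg; rw [← hg]
  have hM0 : Mx ≤ 0 := by
    have hmem := T.max'_mem hTne
    rw [← hMx] at hmem
    rw [hT] at hmem
    rcases Finset.mem_insert.mp hmem with h | h
    · exact le_of_eq h
    · obtain ⟨v, hvS, hgv⟩ := Finset.mem_image.mp h
      exact key v.1.toNat v le_rfl hgv
  exact fun v => (hub v).trans hM0

/-- Uniqueness: harmonic with zero boundary values implies identically zero. -/
lemma harmonicZero (P Q : ℤ) (g : ℤ × ℤ → ℝ)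
    (h0 : ∀ v, ¬ InRect P Q v → g v = 0)
    (hh : ∀ v, InRect P Q v → 4 * g v =
      g (v.1 + 1, v.2) + g (v.1 - 1, v.2) + g (v.1, v.2 + 1) + g (v.1, v.2 - 1)) :
    ∀ v, g v = 0 := by
  have h1 := maxPrinciple P Q g h0 hh
  have h2 := maxPrinciple P Q (-g) (fun v hv => by simp [h0 v hv])
    (fun v hv => by have := hh v hv; simp only [Pi.neg_apply]; linarith)
  intro v
  have h3 := h2 v
  simp only [Pi.neg_apply] at h3
  linarith [h1 v]

/-- Solvability of the discrete Dirichlet problem on the rectangle. -/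
lemma dirichlet_solve (P Q : ℤ) (a : ℤ × ℤ → ℝ) :
    ∃ g : ℤ × ℤ → ℝ, (∀ v, ¬ InRect P Q v → g v = 0) ∧
      ∀ v, InRect P Q v → 4 * g v =
        g (v.1 + 1, v.2) + g (v.1 - 1, v.2) + g (v.1, v.2 + 1) + g (v.1, v.2 - 1) + a v := by
  classical
  set S : Finset (ℤ × ℤ) := Finset.Ioo 0 P ×ˢ Finset.Ioo 0 Q with hS
  have hmemS : ∀ v : ℤ × ℤ, v ∈ S ↔ InRect P Q v := by
    intro v
    rw [hS, Finset.mem_product, Finset.mem_Ioo, Finset.mem_Ioo, InRect]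
    tauto
  set ext : (↥S → ℝ) → (ℤ × ℤ → ℝ) :=
    fun u v => if h : v ∈ S then u ⟨v, h⟩ else 0 with hext
  have hext_add : ∀ u w : ↥S → ℝ, ∀ v, ext (u + w) v = ext u v + ext w v := by
    intro u w v; rw [hext]; dsimp only; split <;> simp
  have hext_smul : ∀ (c : ℝ) (u : ↥S → ℝ), ∀ v, ext (c • u) v = c * ext u v := by
    intro c u v; rw [hext]; dsimp only; split <;> simp
  set L : (↥S → ℝ) →ₗ[ℝ] (↥S → ℝ) :=
    { toFun := fun u s => 4 * u s - ext u ((s : ℤ × ℤ).1 + 1, (s : ℤ × ℤ).2)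
        - ext u ((s : ℤ × ℤ).1 - 1, (s : ℤ × ℤ).2)
        - ext u ((s : ℤ × ℤ).1, (s : ℤ × ℤ).2 + 1)
        - ext u ((s : ℤ × ℤ).1, (s : ℤ × ℤ).2 - 1)
      map_add' := by
        intro u w; funext s
        simp only [hext_add, Pi.add_apply]; ring
      map_smul' := by
        intro c u; funext s
        simp only [hext_smul, Pi.smul_apply, smul_eq_mul, RingHom.id_apply]; ring } with hL
  have hinj : Function.Injective L := by
    rw [← LinearMap.ker_eq_bot, LinearMap.ker_eq_bot']
    intro u hu
    have hgz : ∀ v, ext u v = 0 := by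
      apply harmonicZero P Q
      · intro v hv
        rw [hext]; dsimp only
        rw [dif_neg (fun h => hv ((hmemS v).mp h))]
      · intro v hv
        have hvS : v ∈ S := (hmemS v).mpr hv
        have hcf := congrFun hu ⟨v, hvS⟩
        rw [hL] at hcf
        simp only [LinearMap.coe_mk, AddHom.coe_mk, Pi.zero_apply] at hcf
        have hev : ext u v = u ⟨v, hvS⟩ := by rw [hext]; dsimp only; rw [dif_pos hvS]
        rw [hev]
        linarith [hcf]
    funext s
    have hz := hgz (s : ℤ × ℤ)
    rw [hext] at hz; dsimp only at hz
    rw [dif_pos s.2] at hz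
    simpa using hz
  have hsurj : Function.Surjective L := by
    rw [← LinearMap.injective_iff_surjective]
    exact hinj
  obtain ⟨u, hu⟩ := hsurj (fun s => a (s : ℤ × ℤ))
  refine ⟨ext u, ?_, ?_⟩
  · intro v hv
    rw [hext]; dsimp only
    rw [dif_neg (fun h => hv ((hmemS v).mp h))]
  · intro v hv
    have hvS : v ∈ S := (hmemS v).mpr hv
    have hcf := congrFun hu ⟨v, hvS⟩
    rw [hL] at hcf
    simp only [LinearMap.coe_mk, AddHom.coe_mk] at hcf
    have hev : ext u v = u ⟨v, hvS⟩ := by rw [hext]; dsimp only; rw [dif_pos hvS]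
    rw [hev]
    linarith [hcf]

/-- The quotient homomorphism `ℝ →+ ℝ/ℤ`. -/
noncomputable def rho : ℝ →+ AddCircle (1 : ℝ) := QuotientAddGroup.mk' _

lemma rho_apply (x : ℝ) : rho x = (x : AddCircle (1 : ℝ)) := rfl

lemma rho_int (z : ℤ) : rho ((z : ℝ)) = 0 := by
  rw [rho_apply, AddCircle.coe_eq_zero_iff]
  exact ⟨z, by simp⟩

lemma dualMap_eq_dClip (p q : ℤ) (m n : ℕ) (ψ : ℤ × ℤ → AddCircle (1 : ℝ)) :
    dualMap p q m n ψ = dClip p q m n ψ := rfl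

/-- The dual map `π` is a well-defined surjective group homomorphism from
`K(mp,nq)` to `K(p,q)`: it maps `K(mp,nq)` into `K(p,q)`, is additive, and is
surjective.  This realizes an epimorphism of sandpile groups
`G(mp,nq) ↠ G(p,q)`. -/
theorem dualMap_epimorphism (p q m n : ℕ)
    (hp : 0 < p) (hq : 0 < q) (hm : 0 < m) (hn : 0 < n) :
    (∀ ψ, IsK ((m : ℤ) * p) ((n : ℤ) * q) ψ → IsK p q (dualMap p q m n ψ)) ∧
    (∀ ψ₁ ψ₂, IsK ((m : ℤ) * p) ((n : ℤ) * q) ψ₁ →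
      IsK ((m : ℤ) * p) ((n : ℤ) * q) ψ₂ →
      dualMap p q m n (ψ₁ + ψ₂) = dualMap p q m n ψ₁ + dualMap p q m n ψ₂) ∧
    (∀ φ, IsK p q φ → ∃ ψ, IsK ((m : ℤ) * p) ((n : ℤ) * q) ψ ∧
      dualMap p q m n ψ = φ) := by
  have hpz : (0 : ℤ) < (p : ℤ) := by exact_mod_cast hp
  have hqz : (0 : ℤ) < (q : ℤ) := by exact_mod_cast hq
  refine ⟨?_, ?_, ?_⟩
  · -- well-definedness
    intro ψ hψ
    constructor
    · intro v hv
      rw [dualMap, if_neg hv]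
    · intro v hv
      have h := dClip_harmonic (p : ℤ) (q : ℤ) m n hpz hqz hm hn ψ
        (fun _ => (0 : AddCircle (1 : ℝ))) hψ.1 (fun _ _ => rfl)
        (fun w hw => by rw [hψ.2 w hw, add_zero]) v hv
      rw [dualMap_eq_dClip]
      rw [h, add_zero]
  · -- additivity
    intro ψ₁ ψ₂ _ _
    funext v
    simp only [dualMap, Pi.add_apply]
    by_cases hv : InRect (p : ℤ) (q : ℤ) v
    · rw [if_pos hv, if_pos hv, if_pos hv, ← Finset.sum_add_distrib]
      refine Finset.sum_congr rfl fun k _ => ?_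
      rw [← Finset.sum_add_distrib]
      refine Finset.sum_congr rfl fun l _ => ?_
      rw [smul_add]
    · rw [if_neg hv, if_neg hv, if_neg hv, add_zero]
  · -- surjectivity
    intro φ hφ
    classical
    -- real lift of φ
    set f : ℤ × ℤ → ℝ := fun v => if h : InRect (p : ℤ) (q : ℤ) v then
        Classical.choose (QuotientAddGroup.mk_surjective (φ v)) else 0 with hfdef
    have hf : ∀ v, ((f v : ℝ) : AddCircle (1 : ℝ)) = φ v := by
      intro v
      simp only [hfdef]
      by_cases hv : InRect (p : ℤ) (q : ℤ) v
      · rw [dif_pos hv]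
        exact Classical.choose_spec (QuotientAddGroup.mk_surjective (φ v))
      · rw [dif_neg hv, hφ.1 v hv, ← rho_apply, map_zero]
    have hf0 : ∀ v, ¬ InRect (p : ℤ) (q : ℤ) v → f v = 0 := by
      intro v hv; simp only [hfdef]; exact dif_neg hv
    -- the integer-valued source term
    set a : ℤ × ℤ → ℝ := fun v => if InRect (p : ℤ) (q : ℤ) v then
        4 * f v - f (v.1 + 1, v.2) - f (v.1 - 1, v.2) - f (v.1, v.2 + 1) - f (v.1, v.2 - 1)
      else 0 with hadef
    have ha0 : ∀ v, ¬ InRect (p : ℤ) (q : ℤ) v → a v = 0 := by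
      intro v hv; simp only [hadef]; exact if_neg hv
    have haZ : ∀ v, rho (a v) = 0 := by
      intro v
      by_cases hv : InRect (p : ℤ) (q : ℤ) v
      · have h2 := hφ.2 v hv
        rw [← hf v, ← hf (v.1 + 1, v.2), ← hf (v.1 - 1, v.2), ← hf (v.1, v.2 + 1),
          ← hf (v.1, v.2 - 1)] at h2
        have h3 : ((4 * f v : ℝ) : AddCircle (1 : ℝ)) =
            ((f (v.1 + 1, v.2) : ℝ) : AddCircle (1 : ℝ)) + ((f (v.1 - 1, v.2) : ℝ) : AddCircle (1 : ℝ))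
            + ((f (v.1, v.2 + 1) : ℝ) : AddCircle (1 : ℝ)) + ((f (v.1, v.2 - 1) : ℝ) : AddCircle (1 : ℝ)) := by
          rw [← h2, ← rho_apply, ← rho_apply (f v), ← map_zsmul]
          congr 1
          push_cast [zsmul_eq_mul]
          ring
        simp only [hadef, if_pos hv, map_sub, rho_apply]
        rw [h3]
        abel
      · rw [ha0 v hv, map_zero]
    obtain ⟨g, hg0, hgh⟩ := dirichlet_solve ((m : ℤ) * p) ((n : ℤ) * q) a
    set ψ : ℤ × ℤ → AddCircle (1 : ℝ) := fun v => rho (g v) with hψdef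
    have hψ0 : ∀ v, ¬ InRect ((m : ℤ) * p) ((n : ℤ) * q) v → ψ v = 0 := by
      intro v hv; simp only [hψdef]; rw [hg0 v hv, map_zero]
    have hψh : ∀ v, InRect ((m : ℤ) * p) ((n : ℤ) * q) v → (4 : ℤ) • ψ v =
        ψ (v.1 + 1, v.2) + ψ (v.1 - 1, v.2) + ψ (v.1, v.2 + 1) + ψ (v.1, v.2 - 1) := by
      intro v hv
      have h := hgh v hv
      simp only [hψdef]
      rw [← map_zsmul]
      have h4 : (4 : ℤ) • g v = 4 * g v := by push_cast [zsmul_eq_mul]; ring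
      rw [h4, h]
      simp only [map_add]
      rw [haZ v, add_zero]
    refine ⟨ψ, ⟨hψ0, hψh⟩, ?_⟩
    -- dualMap ψ = rho ∘ dClip g
    have hcomm : ∀ v, dualMap (p : ℤ) (q : ℤ) m n ψ v = rho (dClip (p : ℤ) (q : ℤ) m n g v) := by
      intro v
      rw [dualMap, dClip]
      by_cases hv : InRect (p : ℤ) (q : ℤ) v
      · rw [if_pos hv, if_pos hv, map_sum]
        refine Finset.sum_congr rfl fun k _ => ?_
        rw [map_sum]
        refine Finset.sum_congr rfl fun l _ => ?_
        rw [map_zsmul]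
      · rw [if_neg hv, if_neg hv, map_zero]
    -- dClip g = f
    have hgh' : ∀ v, InRect ((m : ℤ) * p) ((n : ℤ) * q) v → (4 : ℤ) • g v =
        g (v.1 + 1, v.2) + g (v.1 - 1, v.2) + g (v.1, v.2 + 1) + g (v.1, v.2 - 1) + a v := by
      intro v hv
      have h := hgh v hv
      have h4 : (4 : ℤ) • g v = 4 * g v := by push_cast [zsmul_eq_mul]; ring
      rw [h4, h]
    have hclip := dClip_harmonic (p : ℤ) (q : ℤ) m n hpz hqz hm hn g a hg0 ha0 hgh'
    have hD0 : ∀ v, ¬ InRect (p : ℤ) (q : ℤ) v → dClip (p : ℤ) (q : ℤ) m n g v = 0 := by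
      intro v hv; rw [dClip, if_neg hv]
    have hfh : ∀ v, InRect (p : ℤ) (q : ℤ) v → 4 * f v =
        f (v.1 + 1, v.2) + f (v.1 - 1, v.2) + f (v.1, v.2 + 1) + f (v.1, v.2 - 1) + a v := by
      intro v hv
      rw [hadef]; simp only [if_pos hv]; ring
    have hzero := harmonicZero (p : ℤ) (q : ℤ)
      (fun v => dClip (p : ℤ) (q : ℤ) m n g v - f v)
      (by
        intro v hv
        show dClip (p : ℤ) (q : ℤ) m n g v - f v = 0
        rw [hD0 v hv, hf0 v hv, sub_zero])
      (by
        intro v hv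
        have h1 := hclip v hv
        have h4 : (4 : ℤ) • dClip (p : ℤ) (q : ℤ) m n g v =
            4 * dClip (p : ℤ) (q : ℤ) m n g v := by push_cast [zsmul_eq_mul]; ring
        rw [h4] at h1
        have h2 := hfh v hv
        show 4 * (dClip (p : ℤ) (q : ℤ) m n g v - f v) =
          (dClip (p : ℤ) (q : ℤ) m n g (v.1 + 1, v.2) - f (v.1 + 1, v.2)) +
          (dClip (p : ℤ) (q : ℤ) m n g (v.1 - 1, v.2) - f (v.1 - 1, v.2)) +
          (dClip (p : ℤ) (q : ℤ) m n g (v.1, v.2 + 1) - f (v.1, v.2 + 1)) +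
          (dClip (p : ℤ) (q : ℤ) m n g (v.1, v.2 - 1) - f (v.1, v.2 - 1))
        linarith [h1, h2])
    have hDf : ∀ v, dClip (p : ℤ) (q : ℤ) m n g v = f v := by
      intro v
      have hz := hzero v
      have hz' : dClip (p : ℤ) (q : ℤ) m n g v - f v = 0 := hz
      linarith [hz']
    funext v
    rw [hcomm v, hDf v, rho_apply, hf v]
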